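/- Sublinear convergence of the proximal gradient algorithm: assume W has at least one nonzero entry and define L_x = (max over observed entries of X minus min over observed entries of X)^2, L_w = max_j (Σ_i W_{ij})/n1 + max_i (Σ_j W_{ij})/n2, and L_f = L_x L_w / 2. Let μ > L_f, let M_0 satisfy ‖M_0‖_∞ ≤ α, define M_{k+1} = S_{λ/μ,α}(M_k − ∇L(M_k)/μ) and F_k = L(M_k) + λ‖M_k‖_*, and let M̂ be a minimizer of F(M) = L(M) + λ‖M‖_* over {M : ‖M‖_∞ ≤ α}. Then every accumulation point of the sequence {M_k} is a minimizer of F over {M : ‖M‖_∞ ≤ α}, and for every k ≥ 1, F_k − F(M̂) ≤ μ ‖M_0 − M̂‖_F² / (2k). -/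

import Mathlib

/-!
Each summand of `L` is the logistic loss `s ↦ log (1 + exp (-c s))` of a difference of two
entries; its second derivative `c² σ(1 - σ)` lies in `[0, c²/4]`, so `L` is convex, and the row and
column weight sums turn the curvature bound into the descent inequality with constant `L_f`.
The nuclear norm is convex because it is the maximum of the Frobenius pairing `⟨A, B⟩` over
contractions `B`, attained at `B = A V Σ⁺ Vᵀ` for an SVD `A = U Σ Vᵀ`. With both facts, the
optimality of the proximal step gives the three-point inequality
`μ/2 (‖M_{k+1} - Z‖² - ‖M_k - Z‖²) ≤ F(Z) - F(M_{k+1})` for every feasible `Z`: with `Z = M_k` the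
values `F_k` decrease, and with `Z = M̂` the inequality telescopes to the `O(1/k)` rate. Hence
`F_k → F(M̂)`, and since `F` is continuous (a convex function on a finite-dimensional space) and
the box `‖M‖_∞ ≤ α` is closed, every cluster point of `M_k` is a minimizer.
-/

open scoped BigOperators Classical
open MeasureTheory ProbabilityTheory Matrix

noncomputable section

namespace NMC

/-- Real `n1 × n2` matrices. -/
abbrev Mat (n1 n2 : ℕ) := Matrix (Fin n1) (Fin n2) ℝ

variable {n1 n2 : ℕ}

/-- The pairwise pseudo-log-likelihood loss
`l_{i1j1,i2j2}(m1,m2) = log(1 + exp(−(x1 − x2)(m1 − m2)))`. -/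
def pl (x1 x2 m1 m2 : ℝ) : ℝ := Real.log (1 + Real.exp (-((x1 - x2) * (m1 - m2))))

/-- The row- and column-wise matrix U-statistic loss `L(M)`. -/
def lossL (X W M : Mat n1 n2) : ℝ :=
  (1 / (n2 : ℝ)) * ∑ i : Fin n1, ∑ j1 : Fin n2, ∑ j2 : Fin n2,
      W i j1 * W i j2 * pl (X i j1) (X i j2) (M i j1) (M i j2) +
  (1 / (n1 : ℝ)) * ∑ j : Fin n2, ∑ i1 : Fin n1, ∑ i2 : Fin n1,
      W i1 j * W i2 j * pl (X i1 j) (X i2 j) (M i1 j) (M i2 j)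

/-- Update a single entry of a matrix. -/
def updEntry (M : Mat n1 n2) (i : Fin n1) (j : Fin n2) (t : ℝ) : Mat n1 n2 :=
  fun i' j' => if i' = i ∧ j' = j then t else M i' j'

/-- The gradient matrix `∇L(M)`, whose `(i,j)` entry is the partial derivative
`∂L(M)/∂m_{ij}`. -/
def gradL (X W M : Mat n1 n2) : Mat n1 n2 :=
  fun i j => deriv (fun t => lossL X W (updEntry M i j t)) (M i j)

/-- Frobenius norm. -/
def frobNorm (A : Mat n1 n2) : ℝ := Real.sqrt (∑ i, ∑ j, A i j ^ 2)

/-- Entrywise sup norm `‖A‖_∞ = max_{i,j} |a_{ij}|`. -/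
def infNorm (A : Mat n1 n2) : ℝ := sSup (Set.range fun p : Fin n1 × Fin n2 => |A p.1 p.2|)

/-- The (unsorted) singular values of `A`: square roots of eigenvalues of `Aᴴ A`. -/
def svalsUnsorted (A : Mat n1 n2) : Fin n2 → ℝ :=
  fun k => Real.sqrt ((Matrix.isHermitian_conjTranspose_mul_self A).eigenvalues k)

/-- Nuclear norm `‖A‖_*`: sum of the singular values. -/
def nuclNorm (A : Mat n1 n2) : ℝ := ∑ k, svalsUnsorted A k

/-- `sval A k` is the `k`-th largest singular value of `A` (1-indexed), `σ_k(A)`. -/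
def sval (A : Mat n1 n2) (k : ℕ) : ℝ :=
  if h : 1 ≤ k ∧ k ≤ n2 then
    svalsUnsorted A (Tuple.sort (svalsUnsorted A) ⟨n2 - k, by omega⟩)
  else 0

/-- Spectral norm `‖A‖ = σ_1(A)`. -/
def specNorm (A : Mat n1 n2) : ℝ := sval A 1

/-- Tail sum of singular values `Σ_{k=r}^{n1 ∧ n2} σ_k(A)`. -/
def tailSum (A : Mat n1 n2) (r : ℕ) : ℝ := ∑ k ∈ Finset.Icc r (min n1 n2), sval A k

/-- Mean of the entries of a matrix, `M_m(A) = 1ᵀ A 1/(n1 n2)`. -/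
def matMean (A : Mat n1 n2) : ℝ := (∑ i, ∑ j, A i j) / ((n1 : ℝ) * (n2 : ℝ))

/-- `M ⊕ c = M + c 1 1ᵀ`. -/
def oplus (M : Mat n1 n2) (c : ℝ) : Mat n1 n2 := fun i j => M i j + c

/-- The weights `𝒲_{i1j1,i2j2}`. -/
def wgt (al : ℝ) (X W : Mat n1 n2) (i1 : Fin n1) (j1 : Fin n2) (i2 : Fin n1) (j2 : Fin n2) : ℝ :=
  W i1 j1 * W i2 j2 * (X i1 j1 - X i2 j2) ^ 2 /
    (4 + 2 * Real.exp (2 * al * (X i1 j1 - X i2 j2)) +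
      2 * Real.exp (2 * al * (X i2 j2 - X i1 j1)))

/-- The sample semi-norm squared `D_s²(M)`. -/
def Ds2 (al : ℝ) (X W M : Mat n1 n2) : ℝ :=
  (1 / (n2 : ℝ)) * ∑ i : Fin n1, ∑ j1 : Fin n2, ∑ j2 : Fin n2,
      (M i j1 - M i j2) ^ 2 * wgt al X W i j1 i j2 +
  (1 / (n1 : ℝ)) * ∑ j : Fin n2, ∑ i1 : Fin n1, ∑ i2 : Fin n1,
      (M i1 j - M i2 j) ^ 2 * wgt al X W i1 j i2 j

/-- The population semi-norm squared `D²(M)` (all weights equal to 1). -/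
def D2 (M : Mat n1 n2) : ℝ :=
  (1 / (n2 : ℝ)) * ∑ i : Fin n1, ∑ j1 : Fin n2, ∑ j2 : Fin n2, (M i j1 - M i j2) ^ 2 +
  (1 / (n1 : ℝ)) * ∑ j : Fin n2, ∑ i1 : Fin n1, ∑ i2 : Fin n1, (M i1 j - M i2 j) ^ 2

/-- `L_x`: squared range of the observed entries of `X`. -/
def Lx (X W : Mat n1 n2) : ℝ :=
  (sSup {x : ℝ | ∃ p : Fin n1 × Fin n2, W p.1 p.2 = 1 ∧ x = X p.1 p.2} -
    sInf {x : ℝ | ∃ p : Fin n1 × Fin n2, W p.1 p.2 = 1 ∧ x = X p.1 p.2}) ^ 2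

/-- `L_w = max_j (Σ_i W_{ij})/n1 + max_i (Σ_j W_{ij})/n2`. -/
def Lw (W : Mat n1 n2) : ℝ :=
  sSup (Set.range fun j : Fin n2 => ∑ i, W i j) / (n1 : ℝ) +
  sSup (Set.range fun i : Fin n1 => ∑ j, W i j) / (n2 : ℝ)

/-- `L_f = L_x L_w / 2`, the Lipschitz constant of `∇L`. -/
def Lf (X W : Mat n1 n2) : ℝ := Lx X W * Lw W / 2

/-- The objective of the proximal problem defining `S_{lam,al}(A)`. -/
def proxObj (lam : ℝ) (A Y : Mat n1 n2) : ℝ := 1 / 2 * frobNorm (Y - A) ^ 2 + lam * nuclNorm Y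

/-- `IsProx lam al A Y` states that `Y = S_{lam,al}(A)`, i.e. `Y` minimizes
`(1/2)‖Y − A‖_F² + lam ‖Y‖_*` over `{Y : ‖Y‖_∞ ≤ al}`. -/
def IsProx (lam al : ℝ) (A Y : Mat n1 n2) : Prop :=
  infNorm Y ≤ al ∧ ∀ Z : Mat n1 n2, infNorm Z ≤ al → proxObj lam A Y ≤ proxObj lam A Z

/-- The penalized objective `F(M) = L(M) + lam ‖M‖_*`. -/
def objF (X W : Mat n1 n2) (lam : ℝ) (M : Mat n1 n2) : ℝ := lossL X W M + lam * nuclNorm M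

/-- `Mh` is a minimizer of `L(M) + lam ‖M‖_*` over `{M : ‖M‖_∞ ≤ al}`. -/
def IsMin (X W : Mat n1 n2) (lam al : ℝ) (Mh : Mat n1 n2) : Prop :=
  infNorm Mh ≤ al ∧ ∀ M : Mat n1 n2, infNorm M ≤ al → objF X W lam Mh ≤ objF X W lam M

/-- `c` minimizes `c' ↦ ‖M ⊕ c'‖_*`; then `T(M) = M ⊕ c`. -/
def IsMinShift (M : Mat n1 n2) (c : ℝ) : Prop :=
  ∀ c' : ℝ, nuclNorm (oplus M c) ≤ nuclNorm (oplus M c')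

/-- `U` and `V` have as columns top-`r` left and right singular vectors of `A`. -/
def IsTopSVD (r : ℕ) (A : Mat n1 n2) (U : Matrix (Fin n1) (Fin r) ℝ)
    (V : Matrix (Fin n2) (Fin r) ℝ) : Prop :=
  Uᵀ * U = 1 ∧ Vᵀ * V = 1 ∧
  A * V = U * Matrix.diagonal (fun k : Fin r => sval A (k.1 + 1)) ∧
  Aᵀ * U = V * Matrix.diagonal (fun k : Fin r => sval A (k.1 + 1))

/-- A choice of top-`r` left and right singular vector matrices of `A`. -/
def UVchoice (r : ℕ) (A : Mat n1 n2) :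
    Matrix (Fin n1) (Fin r) ℝ × Matrix (Fin n2) (Fin r) ℝ :=
  if h : ∃ p : Matrix (Fin n1) (Fin r) ℝ × Matrix (Fin n2) (Fin r) ℝ,
      IsTopSVD r A p.1 p.2 then h.choose else (0, 0)

/-- `Θ2 = (I − UUᵀ)(Θ ⊖ M_m(Θ))(I − VVᵀ)`, with `U,V` top-`r` singular vectors of
`M* ⊕ M_m(Θ)`. -/
def theta2 (Mstar : Mat n1 n2) (r : ℕ) (Θ : Mat n1 n2) : Mat n1 n2 :=
  (1 - (UVchoice r (oplus Mstar (matMean Θ))).1 * (UVchoice r (oplus Mstar (matMean Θ))).1ᵀ) *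
    oplus Θ (-matMean Θ) *
  (1 - (UVchoice r (oplus Mstar (matMean Θ))).2 * (UVchoice r (oplus Mstar (matMean Θ))).2ᵀ)

/-- `Θ1 = Θ ⊖ M_m(Θ) − Θ2`. -/
def theta1 (Mstar : Mat n1 n2) (r : ℕ) (Θ : Mat n1 n2) : Mat n1 n2 :=
  oplus Θ (-matMean Θ) - theta2 Mstar r Θ

/-- The cone `C_r = {Θ : ‖Θ2‖_* ≤ 4 Σ_{k=r}^{n1∧n2} σ_k(M*) + 3‖Θ1‖_*}`. -/
def coneC (Mstar : Mat n1 n2) (r : ℕ) : Set (Mat n1 n2) :=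
  {Θ | nuclNorm (theta2 Mstar r Θ) ≤ 4 * tailSum Mstar r + 3 * nuclNorm (theta1 Mstar r Θ)}

/-- Euclidean norm of a vector. -/
def euclNorm {n : ℕ} (v : Fin n → ℝ) : ℝ := Real.sqrt (∑ i, v i ^ 2)

/-- The quantity `𝔅(M*)` of Theorem 4, computed from `T(M*) = M* ⊕ cstar`. -/
def Bconst (Mstar : Mat n1 n2) (cstar : ℝ) : ℝ :=
  euclNorm ((1 - (UVchoice (oplus Mstar cstar).rank (oplus Mstar cstar)).1 *
        (UVchoice (oplus Mstar cstar).rank (oplus Mstar cstar)).1ᵀ).mulVec fun _ => (1 : ℝ)) *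
    euclNorm ((1 - (UVchoice (oplus Mstar cstar).rank (oplus Mstar cstar)).2 *
        (UVchoice (oplus Mstar cstar).rank (oplus Mstar cstar)).2ᵀ).mulVec fun _ => (1 : ℝ)) /
      Real.sqrt ((n1 : ℝ) * (n2 : ℝ)) -
  Real.sqrt ((n1 : ℝ) * (n2 : ℝ)) *
    |matMean ((UVchoice (oplus Mstar cstar).rank (oplus Mstar cstar)).1 *
      (UVchoice (oplus Mstar cstar).rank (oplus Mstar cstar)).2ᵀ)|

/-- The log-normalization function `b(m) = log ∫ exp(x m + f(x)) dν(x)`. -/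
def bFun (ν : Measure ℝ) (f : ℝ → ℝ) (m : ℝ) : ℝ :=
  Real.log ((∫⁻ x, ENNReal.ofReal (Real.exp (x * m + f x)) ∂ν).toReal)

/-- The random variables `Z̃_{i1j1,i2j2}` of the conditional sub-Gaussian condition. -/
def Ztil {Ω : Type} (Mstar : Mat n1 n2) (X : Ω → Mat n1 n2)
    (i1 : Fin n1) (j1 : Fin n2) (i2 : Fin n1) (j2 : Fin n2) (ω : Ω) : ℝ :=
  (X ω i1 j1 - X ω i2 j2) /
    (2 + Real.exp ((X ω i1 j1 - X ω i2 j2) * (Mstar i1 j1 - Mstar i2 j2)) +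
      Real.exp (-((X ω i1 j1 - X ω i2 j2) * (Mstar i1 j1 - Mstar i2 j2))))

/-- `π_U = max_{i,j} P(W_{ij} = 1)`. -/
def piU {Ω : Type} [MeasurableSpace Ω] (P : Measure Ω) (W : Ω → Mat n1 n2) : ℝ :=
  sSup (Set.range fun p : Fin n1 × Fin n2 => (P {ω | W ω p.1 p.2 = 1}).toReal)

/-- `π_L = min_{i,j} P(W_{ij} = 1)`. -/
def piL {Ω : Type} [MeasurableSpace Ω] (P : Measure Ω) (W : Ω → Mat n1 n2) : ℝ :=
  sInf (Set.range fun p : Fin n1 × Fin n2 => (P {ω | W ω p.1 p.2 = 1}).toReal)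

/-- Rectangular diagonal matrix with diagonal entries `d 0, d 1, …`. -/
def rectDiag (n1 n2 : ℕ) (d : ℕ → ℝ) : Mat n1 n2 :=
  fun i j => if (i : ℕ) = (j : ℕ) then d (i : ℕ) else 0

end NMC

theorem add_mul_sub_add_sq_le_of_le_deriv2 {f f' f'' : ℝ → ℝ} {a : ℝ}
    (hf : ∀ x, HasDerivAt f (f' x) x) (hf' : ∀ x, HasDerivAt f' (f'' x) x)
    (ha : ∀ x, a ≤ f'' x) (x y : ℝ) :
    f x + f' x * (y - x) + a / 2 * (y - x) ^ 2 ≤ f y := by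
  set g : ℝ → ℝ := fun t => f t - f' x * t - a / 2 * (t - x) ^ 2
  set g' : ℝ → ℝ := fun t => f' t - f' x - a * (t - x)
  have hg : ∀ t, HasDerivAt g (g' t) t := fun t =>
    (((hf t).fun_sub ((hasDerivAt_id' t).const_mul (f' x))).fun_sub
      ((((hasDerivAt_id' t).sub_const x).fun_pow 2).const_mul (a / 2))).congr_deriv
      (by simp [g']; ring)
  have hg'_mono : Monotone g' := monotone_of_hasDerivAt_nonneg
    (fun t => (((hf' t).sub_const (f' x)).fun_sub
      (((hasDerivAt_id' t).sub_const x).const_mul a)).congr_deriv (by ring))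
    (fun t => sub_nonneg.2 (ha t))
  have hg'x : g' x = 0 := by simp [g']
  suffices g x ≤ g y by simp only [g] at this; linarith
  rcases lt_trichotomy x y with hxy | rfl | hxy
  · obtain ⟨ξ, hξ, hslope⟩ := exists_hasDerivAt_eq_slope g g' hxy
      (fun t _ => (hg t).continuousAt.continuousWithinAt) (fun t _ => hg t)
    have : 0 ≤ g' ξ := hg'x ▸ hg'_mono hξ.1.le
    rw [hslope, div_nonneg_iff] at this
    rcases this with h | h <;> linarith [h.1, h.2]
  · rfl
  · obtain ⟨ξ, hξ, hslope⟩ := exists_hasDerivAt_eq_slope g g' hxy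
      (fun t _ => (hg t).continuousAt.continuousWithinAt) (fun t _ => hg t)
    have : g' ξ ≤ 0 := hg'x ▸ hg'_mono hξ.2.le
    rw [hslope, div_nonpos_iff] at this
    rcases this with h | h <;> linarith [h.1, h.2]

theorem sum_sum_mul_mul_sub_sq_le {κ : Type*} [Fintype κ] (w h : κ → ℝ) :
    ∑ j1, ∑ j2, w j1 * w j2 * (h j1 - h j2) ^ 2 ≤ 2 * (∑ j, w j) * ∑ j, w j * h j ^ 2 := by
  have hexp : ∑ j1, ∑ j2, w j1 * w j2 * (h j1 - h j2) ^ 2 =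
      2 * (∑ j, w j) * (∑ j, w j * h j ^ 2) - 2 * (∑ j, w j * h j) ^ 2 := by
    have hterm : ∀ j1 j2, w j1 * w j2 * (h j1 - h j2) ^ 2 = w j1 * h j1 ^ 2 * w j2 +
        w j1 * (w j2 * h j2 ^ 2) - 2 * (w j1 * h j1 * (w j2 * h j2)) := fun _ _ => by ring
    simp only [hterm, Finset.sum_sub_distrib, Finset.sum_add_distrib, ← Finset.mul_sum,
      ← Finset.sum_mul]
    ring
  rw [hexp]
  nlinarith [sq_nonneg (∑ j, w j * h j)]

theorem mulVec_dotProduct_mulVec_self {m n : Type*} [Fintype m] [Fintype n]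
    (M : Matrix m n ℝ) (x : n → ℝ) : M *ᵥ x ⬝ᵥ M *ᵥ x = x ⬝ᵥ (Mᵀ * M) *ᵥ x := by
  rw [← mulVec_mulVec, dotProduct_mulVec x, vecMul_transpose]

theorem ConvexOn.continuous_of_finiteDimensional {V : Type*} [AddCommGroup V] [Module ℝ V]
    [TopologicalSpace V] [IsTopologicalAddGroup V] [ContinuousSMul ℝ V] [T2Space V]
    [FiniteDimensional ℝ V] {f : V → ℝ} (hf : ConvexOn ℝ Set.univ f) : Continuous f := by
  let e : V ≃L[ℝ] EuclideanSpace ℝ (Fin (Module.finrank ℝ V)) :=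
    (LinearEquiv.ofFinrankEq _ _ (finrank_euclideanSpace_fin).symm).toContinuousLinearEquiv
  have : Continuous (f ∘ e.symm) := continuousOn_univ.1
    ((hf.comp_linearMap e.symm.toLinearEquiv.toLinearMap).continuousOn isOpen_univ)
  simpa [Function.comp_def] using this.comp e.continuous

section ProximalGradient

open scoped RealInnerProductSpace

variable {E : Type*} [NormedAddCommGroup E] [InnerProductSpace ℝ E]

theorem nonneg_of_forall_mem_Ioc_nonneg_add_mul {K c : ℝ}
    (h : ∀ t ∈ Set.Ioc (0 : ℝ) 1, 0 ≤ K + t * c) : 0 ≤ K := by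
  have hlim : Filter.Tendsto (fun t => K + t * c) (nhdsWithin 0 (Set.Ioi 0)) (nhds K) := by
    have : Continuous fun t : ℝ => K + t * c := by fun_prop
    simpa using (this.tendsto 0).mono_left nhdsWithin_le_nhds
  exact ge_of_tendsto hlim (Filter.mem_of_superset (Ioc_mem_nhdsGT zero_lt_one) h)

theorem inner_add_sub_nonneg_of_isMinOn {C : Set E} {g : E → ℝ} (hg : ConvexOn ℝ C g)
    {a p z : E} (hp : p ∈ C) (hz : z ∈ C)
    (hmin : IsMinOn (fun w => 1 / 2 * ‖w - a‖ ^ 2 + g w) C p) :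
    0 ≤ ⟪p - a, z - p⟫ + (g z - g p) := by
  refine nonneg_of_forall_mem_Ioc_nonneg_add_mul (c := 1 / 2 * ‖z - p‖ ^ 2) fun t ht => ?_
  have hwC : p + t • (z - p) ∈ C := hg.1.add_smul_sub_mem hp hz ⟨ht.1.le, ht.2⟩
  have hgw : g (p + t • (z - p)) ≤ (1 - t) * g p + t * g z := by
    have := hg.2 hp hz (sub_nonneg.2 ht.2) ht.1.le (by ring)
    simpa [smul_sub, sub_smul, add_sub_left_comm, add_comm] using this
  have hnorm : ‖p + t • (z - p) - a‖ ^ 2 =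
      ‖p - a‖ ^ 2 + 2 * t * ⟪p - a, z - p⟫ + t ^ 2 * ‖z - p‖ ^ 2 := by
    rw [show p + t • (z - p) - a = (p - a) + t • (z - p) by abel, norm_add_sq_real,
      inner_smul_right, norm_smul, Real.norm_eq_abs, abs_of_pos ht.1]
    ring
  have := isMinOn_iff.1 hmin _ hwC
  simp only [hnorm] at this
  nlinarith [ht.1]

theorem proxGrad_three_point {f g : E → ℝ} {C : Set E} (hg : ConvexOn ℝ C g) {L μ : ℝ}
    (hμ : 0 < μ) (hLμ : L ≤ μ) {y G p z : E} (hp : p ∈ C) (hz : z ∈ C)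
    (hprox : IsMinOn (fun w => 1 / 2 * ‖w - (y - μ⁻¹ • G)‖ ^ 2 + μ⁻¹ * g w) C p)
    (hlow : f y + ⟪G, z - y⟫ ≤ f z)
    (hup : f p ≤ f y + ⟪G, p - y⟫ + L / 2 * ‖p - y‖ ^ 2) :
    μ / 2 * (‖p - z‖ ^ 2 - ‖y - z‖ ^ 2) ≤ f z + g z - (f p + g p) := by
  have hvi := inner_add_sub_nonneg_of_isMinOn (hg.smul (inv_nonneg.2 hμ.le)) hp hz hprox
  simp only [smul_eq_mul] at hvi
  rw [sub_sub_eq_add_sub, add_sub_right_comm, inner_add_left, inner_smul_left,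
    conj_trivial] at hvi
  have hvi' : 0 ≤ μ * ⟪p - y, z - p⟫ + ⟪G, z - p⟫ + (g z - g p) := by
    have := mul_nonneg hμ.le hvi
    rwa [mul_add, mul_add, mul_sub, ← mul_assoc, ← mul_assoc, ← mul_assoc,
      mul_inv_cancel₀ hμ.ne', one_mul, one_mul, one_mul] at this
  have hsplit : ⟪G, z - y⟫ = ⟪G, z - p⟫ + ⟪G, p - y⟫ := by
    rw [← inner_add_right]; congr 1; abel
  have hpyth : ‖y - z‖ ^ 2 = ‖p - z‖ ^ 2 + ‖p - y‖ ^ 2 + 2 * ⟪p - y, z - p⟫ := by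
    rw [show y - z = (p - z) - (p - y) by abel, norm_sub_sq_real,
      show z - p = -(p - z) by abel, inner_neg_right, real_inner_comm]
    ring
  have hLμ' : L / 2 * ‖p - y‖ ^ 2 ≤ μ / 2 * ‖p - y‖ ^ 2 := by gcongr
  nlinarith

end ProximalGradient

theorem sub_le_div_of_three_point {α : Type*} {Φ : α → ℝ} {D : α → α → ℝ} {S : Set α}
    {x : ℕ → α} {c : ℝ} (hc : 0 ≤ c) (hD : ∀ u v, 0 ≤ D u v) (hDself : ∀ u, D u u = 0)
    (hx : ∀ k, x k ∈ S)
    (hstep : ∀ k, ∀ z ∈ S, c * (D (x (k + 1)) z - D (x k) z) ≤ Φ z - Φ (x (k + 1)))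
    {z : α} (hz : z ∈ S) {k : ℕ} (hk : 1 ≤ k) : Φ (x k) - Φ z ≤ c * D (x 0) z / k := by
  have hanti : Antitone fun i => Φ (x i) := antitone_nat_of_succ_le fun i => by
    have := hstep i (x i) (hx i)
    rw [hDself] at this
    nlinarith [mul_nonneg hc (hD (x (i + 1)) (x i))]
  have hsum : (k : ℝ) * (Φ (x k) - Φ z) ≤ c * (D (x 0) z - D (x k) z) := calc
    (k : ℝ) * (Φ (x k) - Φ z) = ∑ i ∈ Finset.range k, (Φ (x k) - Φ z) := by simp [mul_sub]
    _ ≤ ∑ i ∈ Finset.range k, (Φ (x (i + 1)) - Φ z) :=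
      Finset.sum_le_sum fun i hi => by linarith [hanti (Finset.mem_range.1 hi : i + 1 ≤ k)]
    _ ≤ ∑ i ∈ Finset.range k, c * (D (x i) z - D (x (i + 1)) z) :=
      Finset.sum_le_sum fun i _ => by linarith [hstep i z hz]
    _ = c * (D (x 0) z - D (x k) z) := by rw [← Finset.mul_sum, Finset.sum_range_sub']
  rw [le_div_iff₀ (by exact_mod_cast hk)]
  nlinarith [mul_nonneg hc (hD (x k) z)]

theorem tendsto_of_sub_le_div {a : ℕ → ℝ} {b C : ℝ} (hlow : ∀ k, b ≤ a k)
    (hup : ∀ k, 1 ≤ k → a k - b ≤ C / k) : Filter.Tendsto a Filter.atTop (nhds b) := by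
  have hC : Filter.Tendsto (fun k : ℕ => b + C / k) Filter.atTop (nhds b) := by
    simpa using tendsto_const_nhds.add (tendsto_const_div_atTop_nhds_zero_nat C)
  refine tendsto_of_tendsto_of_tendsto_of_le_of_le' tendsto_const_nhds hC
    (Filter.Eventually.of_forall hlow) ?_
  filter_upwards [Filter.eventually_ge_atTop 1] with k hk
  linarith [hup k hk]

theorem mapClusterPt_mem_and_isMinOn {X : Type*} [TopologicalSpace X] {Φ : X → ℝ} {S : Set X}
    {x : ℕ → X} {a b : X} (hΦ : Continuous Φ) (hS : IsClosed S) (hxS : ∀ k, x k ∈ S)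
    (hb : IsMinOn Φ S b) (hlim : Filter.Tendsto (Φ ∘ x) Filter.atTop (nhds (Φ b)))
    (ha : MapClusterPt a Filter.atTop x) : a ∈ S ∧ IsMinOn Φ S a := by
  have hΦa : Φ a = Φ b := by
    have : ClusterPt (Φ a) (nhds (Φ b)) :=
      (ha.continuousAt_comp hΦ.continuousAt).clusterPt.mono hlim
    by_contra hne
    exact clusterPt_iff_not_disjoint.1 this (disjoint_nhds_nhds.2 hne)
  exact ⟨hS.mem_of_mapClusterPt ha (Filter.Eventually.of_forall hxS),
    fun z hz => hΦa ▸ hb hz⟩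

namespace NMC

open scoped RealInnerProductSpace

variable {n1 n2 : ℕ}

def frobEquiv : Mat n1 n2 ≃ₗ[ℝ] EuclideanSpace ℝ (Fin n1 × Fin n2) :=
  (LinearEquiv.curry ℝ ℝ (Fin n1) (Fin n2)).symm.trans
    (WithLp.linearEquiv 2 ℝ (Fin n1 × Fin n2 → ℝ)).symm

@[simp]
theorem frobEquiv_apply (A : Mat n1 n2) (p : Fin n1 × Fin n2) : frobEquiv A p = A p.1 p.2 := rfl

theorem inner_frobEquiv (A B : Mat n1 n2) :
    ⟪frobEquiv A, frobEquiv B⟫ = ∑ i, ∑ j, A i j * B i j := by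
  simp [PiLp.inner_apply, Fintype.sum_prod_type, mul_comm]

theorem inner_frobEquiv_mul_right (A B : Mat n1 n2) {U : Matrix (Fin n2) (Fin n2) ℝ}
    (hU : U * Uᵀ = 1) : ⟪frobEquiv (A * U), frobEquiv (B * U)⟫ = ⟪frobEquiv A, frobEquiv B⟫ := by
  have htrace : ∀ P Q : Mat n1 n2, ⟪frobEquiv P, frobEquiv Q⟫ = trace (P * Qᵀ) := by
    intro P Q; simp [inner_frobEquiv, trace, Matrix.mul_apply]
  rw [htrace, htrace, transpose_mul, Matrix.mul_assoc, ← Matrix.mul_assoc U, hU, Matrix.one_mul]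

theorem norm_frobEquiv (A : Mat n1 n2) : ‖frobEquiv A‖ = frobNorm A := by
  simp [EuclideanSpace.norm_eq, frobNorm, Fintype.sum_prod_type]

theorem frobNorm_sq (A : Mat n1 n2) : frobNorm A ^ 2 = ∑ i, ∑ j, A i j ^ 2 :=
  Real.sq_sqrt (by positivity)

theorem infNorm_nonneg (A : Mat n1 n2) : 0 ≤ infNorm A :=
  Real.sSup_nonneg (by rintro _ ⟨p, rfl⟩; exact abs_nonneg _)

theorem abs_le_infNorm (A : Mat n1 n2) (i : Fin n1) (j : Fin n2) : |A i j| ≤ infNorm A :=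
  le_csSup (Set.finite_range _).bddAbove ⟨(i, j), rfl⟩

theorem infNorm_le_iff {A : Mat n1 n2} {r : ℝ} (hr : 0 ≤ r) :
    infNorm A ≤ r ↔ ∀ i j, |A i j| ≤ r :=
  ⟨fun h i j => (abs_le_infNorm A i j).trans h,
    fun h => Real.sSup_le (by rintro _ ⟨p, rfl⟩; exact h p.1 p.2) hr⟩

theorem convexOn_infNorm : ConvexOn ℝ Set.univ (infNorm : Mat n1 n2 → ℝ) := by
  refine ⟨convex_univ, fun A _ B _ a b ha hb _ => ?_⟩
  refine (infNorm_le_iff (by positivity [infNorm_nonneg A, infNorm_nonneg B])).2 fun i j => ?_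
  calc |(a • A + b • B) i j| ≤ a * |A i j| + b * |B i j| := by
        simpa [abs_mul, abs_of_nonneg ha, abs_of_nonneg hb] using
          abs_add_le (a * A i j) (b * B i j)
    _ ≤ a • infNorm A + b • infNorm B := by
        simp only [smul_eq_mul]; gcongr <;> exact abs_le_infNorm _ i j

theorem continuous_infNorm : Continuous (infNorm : Mat n1 n2 → ℝ) :=
  convexOn_infNorm.continuous_of_finiteDimensional

def IsContraction (B : Mat n1 n2) : Prop := ∀ v : Fin n2 → ℝ, B *ᵥ v ⬝ᵥ B *ᵥ v ≤ v ⬝ᵥ v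

theorem svalsUnsorted_nonneg (A : Mat n1 n2) (k : Fin n2) : 0 ≤ svalsUnsorted A k :=
  Real.sqrt_nonneg _

/-- Right singular vectors of `A`, in the order of `svalsUnsorted A`. -/
def svdV (A : Mat n1 n2) : Matrix (Fin n2) (Fin n2) ℝ :=
  (isHermitian_conjTranspose_mul_self A).eigenvectorUnitary

theorem svdV_mul_transpose (A : Mat n1 n2) : svdV A * (svdV A)ᵀ = 1 := by
  have h : svdV A * star (svdV A) = 1 :=
    Matrix.mem_unitaryGroup_iff.1 (isHermitian_conjTranspose_mul_self A).eigenvectorUnitary.2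
  rwa [star_eq_conjTranspose, conjTranspose_eq_transpose_of_trivial] at h

theorem transpose_svdV_mul (A : Mat n1 n2) : (svdV A)ᵀ * svdV A = 1 := by
  have h : star (svdV A) * svdV A = 1 :=
    Matrix.mem_unitaryGroup_iff'.1 (isHermitian_conjTranspose_mul_self A).eigenvectorUnitary.2
  rwa [star_eq_conjTranspose, conjTranspose_eq_transpose_of_trivial] at h

theorem mul_svdV_transpose_mul_self (A : Mat n1 n2) :
    (A * svdV A)ᵀ * (A * svdV A) = diagonal fun k => svalsUnsorted A k ^ 2 := by
  have h : star (svdV A) * (Aᴴ * A) * svdV A =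
      diagonal (RCLike.ofReal ∘ (isHermitian_conjTranspose_mul_self A).eigenvalues) :=
    (isHermitian_conjTranspose_mul_self A).conjStarAlgAut_star_eigenvectorUnitary
  have hσ : RCLike.ofReal ∘ (isHermitian_conjTranspose_mul_self A).eigenvalues =
      fun k => svalsUnsorted A k ^ 2 :=
    funext fun k => (Real.sq_sqrt (eigenvalues_conjTranspose_mul_self_nonneg A k)).symm
  rw [hσ, star_eq_conjTranspose, conjTranspose_eq_transpose_of_trivial,
    conjTranspose_eq_transpose_of_trivial] at h
  rw [transpose_mul, Matrix.mul_assoc, ← Matrix.mul_assoc Aᵀ, ← Matrix.mul_assoc, h]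

theorem sum_mul_svdV_sq (A : Mat n1 n2) (k : Fin n2) :
    ∑ i, (A * svdV A) i k ^ 2 = svalsUnsorted A k ^ 2 := by
  have := congrFun (congrFun (mul_svdV_transpose_mul_self A) k) k
  simp only [Matrix.mul_apply, transpose_apply, diagonal_apply_eq] at this
  simpa only [sq, Matrix.mul_apply] using this

theorem inner_frobEquiv_le_nuclNorm (A : Mat n1 n2) {B : Mat n1 n2} (hB : IsContraction B) :
    ⟪frobEquiv A, frobEquiv B⟫ ≤ nuclNorm A := by
  rw [← inner_frobEquiv_mul_right A B (svdV_mul_transpose A), inner_frobEquiv, Finset.sum_comm,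
    nuclNorm]
  refine Finset.sum_le_sum fun k _ => ?_
  have hBk : ∑ i, (B * svdV A) i k ^ 2 ≤ 1 := by
    have hk := congrFun (congrFun (transpose_svdV_mul A) k) k
    simp only [Matrix.mul_apply, transpose_apply, one_apply_eq] at hk
    simpa [dotProduct, Matrix.mulVec, Matrix.mul_apply, sq, hk] using hB fun j => svdV A j k
  calc ∑ i, (A * svdV A) i k * (B * svdV A) i k
      ≤ √(∑ i, (A * svdV A) i k ^ 2) * √(∑ i, (B * svdV A) i k ^ 2) :=
        Real.sum_mul_le_sqrt_mul_sqrt _ _ _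
    _ ≤ svalsUnsorted A k * 1 := by
        rw [sum_mul_svdV_sq, Real.sqrt_sq (svalsUnsorted_nonneg A k)]
        gcongr
        · exact Real.sqrt_nonneg _
        · exact Real.sqrt_le_one.2 hBk
    _ = svalsUnsorted A k := mul_one _

theorem exists_isContraction_inner_frobEquiv_eq_nuclNorm (A : Mat n1 n2) :
    ∃ B, IsContraction B ∧ ⟪frobEquiv A, frobEquiv B⟫ = nuclNorm A := by
  have hσ : ∀ k, svalsUnsorted A k ^ 2 * (svalsUnsorted A k)⁻¹ = svalsUnsorted A k := fun k => by
    rcases eq_or_ne (svalsUnsorted A k) 0 with h | h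
    · simp [h]
    · field_simp
  -- `0⁻¹ = 0`: a zero singular value contributes nothing to `B`.
  set Dinv : Matrix (Fin n2) (Fin n2) ℝ := diagonal fun k => (svalsUnsorted A k)⁻¹
  refine ⟨A * svdV A * Dinv * (svdV A)ᵀ, fun v => ?_, ?_⟩
  · set w := (svdV A)ᵀ *ᵥ v
    have hw : w ⬝ᵥ w = v ⬝ᵥ v := by
      rw [mulVec_dotProduct_mulVec_self, transpose_transpose, svdV_mul_transpose, one_mulVec]
    have hB : (A * svdV A * Dinv * (svdV A)ᵀ) *ᵥ v =
        (A * svdV A) *ᵥ fun k => (svalsUnsorted A k)⁻¹ * w k := by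
      rw [← mulVec_mulVec, ← mulVec_mulVec]
      congr 1; funext k
      exact mulVec_diagonal _ _ _
    rw [hB, mulVec_dotProduct_mulVec_self, mul_svdV_transpose_mul_self, ← hw]
    simp only [dotProduct, mulVec_diagonal]
    refine Finset.sum_le_sum fun k _ => ?_
    rcases eq_or_ne (svalsUnsorted A k) 0 with h | h
    · simp [h, mul_self_nonneg]
    · field_simp; rfl
  · rw [← inner_frobEquiv_mul_right A _ (svdV_mul_transpose A), inner_frobEquiv, Finset.sum_comm,
      nuclNorm, Matrix.mul_assoc (A * svdV A * Dinv), transpose_svdV_mul, Matrix.mul_one]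
    refine Finset.sum_congr rfl fun k _ => ?_
    simp only [Dinv, mul_diagonal, ← mul_assoc, ← sq, ← Finset.sum_mul, sum_mul_svdV_sq, hσ]

theorem convexOn_nuclNorm : ConvexOn ℝ Set.univ (nuclNorm : Mat n1 n2 → ℝ) := by
  refine ⟨convex_univ, fun A _ B _ a b ha hb _ => ?_⟩
  obtain ⟨C, hC, hCeq⟩ := exists_isContraction_inner_frobEquiv_eq_nuclNorm (a • A + b • B)
  rw [← hCeq, map_add, map_smul, map_smul, inner_add_left, real_inner_smul_left,
    real_inner_smul_left, smul_eq_mul, smul_eq_mul]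
  gcongr <;> exact inner_frobEquiv_le_nuclNorm _ hC

theorem continuous_nuclNorm : Continuous (nuclNorm : Mat n1 n2 → ℝ) :=
  convexOn_nuclNorm.continuous_of_finiteDimensional

def logisticLoss (c s : ℝ) : ℝ := Real.log (1 + Real.exp (-(c * s)))

def logisticLossDeriv (c s : ℝ) : ℝ := -c * Real.sigmoid (-(c * s))

theorem hasDerivAt_logisticLoss (c s : ℝ) :
    HasDerivAt (logisticLoss c) (logisticLossDeriv c s) s := by
  refine ((((hasDerivAt_id' s).const_mul c).fun_neg.exp.const_add 1).log
    (by positivity)).congr_deriv ?_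
  rw [logisticLossDeriv, ← Real.sigmoid_mul_rexp_neg, Real.sigmoid_def]
  field_simp

theorem hasDerivAt_logisticLossDeriv (c s : ℝ) :
    HasDerivAt (logisticLossDeriv c)
      (c ^ 2 * (Real.sigmoid (-(c * s)) * (1 - Real.sigmoid (-(c * s))))) s :=
  (((Real.hasDerivAt_sigmoid _).comp s ((hasDerivAt_id' s).const_mul c).fun_neg).const_mul
    (-c)).congr_deriv (by ring)

theorem sigmoid_mul_one_sub_le (x : ℝ) : Real.sigmoid x * (1 - Real.sigmoid x) ≤ 1 / 4 := by
  nlinarith [sq_nonneg (Real.sigmoid x - 1 / 2)]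

theorem logisticLoss_add_mul_sub_le (c x y : ℝ) :
    logisticLoss c x + logisticLossDeriv c x * (y - x) ≤ logisticLoss c y := by
  simpa using add_mul_sub_add_sq_le_of_le_deriv2 (hasDerivAt_logisticLoss c)
    (hasDerivAt_logisticLossDeriv c) (a := 0) (fun s => mul_nonneg (sq_nonneg c)
      (mul_nonneg (Real.sigmoid_nonneg _) (sub_nonneg.2 (Real.sigmoid_le_one _)))) x y

theorem logisticLoss_le_add_mul_sub_add_sq (c x y : ℝ) :
    logisticLoss c y ≤
      logisticLoss c x + logisticLossDeriv c x * (y - x) + c ^ 2 / 8 * (y - x) ^ 2 := by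
  have := add_mul_sub_add_sq_le_of_le_deriv2 (fun s => (hasDerivAt_logisticLoss c s).neg)
    (fun s => (hasDerivAt_logisticLossDeriv c s).neg) (a := -(c ^ 2 / 4))
    (fun s => by nlinarith [sigmoid_mul_one_sub_le (-(c * s)), sq_nonneg c]) x y
  simp only [Pi.neg_apply] at this
  linarith

section RowLoss

variable {ι κ : Type*} [Fintype ι] [Fintype κ]

def rowLoss (X W M : Matrix ι κ ℝ) : ℝ :=
  ∑ i, ∑ j1, ∑ j2, W i j1 * W i j2 * logisticLoss (X i j1 - X i j2) (M i j1 - M i j2)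

def rowLossDeriv (X W M : Matrix ι κ ℝ) : Matrix ι κ ℝ →ₗ[ℝ] ℝ where
  toFun H := ∑ i, ∑ j1, ∑ j2,
    W i j1 * W i j2 * logisticLossDeriv (X i j1 - X i j2) (M i j1 - M i j2) * (H i j1 - H i j2)
  map_add' H H' := by
    simp only [Matrix.add_apply, add_sub_add_comm, mul_add, Finset.sum_add_distrib]
  map_smul' c H := by
    simp only [Matrix.smul_apply, smul_eq_mul, ← mul_sub, RingHom.id_apply, Finset.mul_sum]
    refine Finset.sum_congr rfl fun i _ => Finset.sum_congr rfl fun j1 _ =>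
      Finset.sum_congr rfl fun j2 _ => by ring

theorem hasDerivAt_rowLoss_add_smul (X W M H : Matrix ι κ ℝ) :
    HasDerivAt (fun t : ℝ => rowLoss X W (M + t • H)) (rowLossDeriv X W M H) 0 := by
  have hterm : ∀ i j1 j2, HasDerivAt
      (fun t : ℝ => logisticLoss (X i j1 - X i j2) ((M + t • H) i j1 - (M + t • H) i j2))
      (logisticLossDeriv (X i j1 - X i j2) (M i j1 - M i j2) * (H i j1 - H i j2)) 0 := by
    intro i j1 j2
    have hlin : HasDerivAt (fun t : ℝ => (M + t • H) i j1 - (M + t • H) i j2)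
        (H i j1 - H i j2) 0 := by
      simp only [Matrix.add_apply, Matrix.smul_apply, smul_eq_mul]
      exact ((((hasDerivAt_id' _).mul_const _).const_add _).fun_sub
        (((hasDerivAt_id' _).mul_const _).const_add _)).congr_deriv (by ring)
    exact (hasDerivAt_logisticLoss _ _).comp_of_eq 0 hlin (by simp)
  refine (HasDerivAt.fun_sum fun i _ => HasDerivAt.fun_sum fun j1 _ => HasDerivAt.fun_sum
    fun j2 _ => (hterm i j1 j2).const_mul (W i j1 * W i j2)).congr_deriv ?_
  simp only [rowLossDeriv, LinearMap.coe_mk, AddHom.coe_mk, mul_assoc]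

theorem rowLoss_add_rowLossDeriv_le {X W : Matrix ι κ ℝ} (hW : ∀ i j, 0 ≤ W i j)
    (M N : Matrix ι κ ℝ) : rowLoss X W M + rowLossDeriv X W M (N - M) ≤ rowLoss X W N := by
  simp only [rowLoss, rowLossDeriv, LinearMap.coe_mk, AddHom.coe_mk, ← Finset.sum_add_distrib]
  gcongr with i _ j1 _ j2 _
  have hw := mul_nonneg (hW i j1) (hW i j2)
  calc _ = W i j1 * W i j2 * (logisticLoss (X i j1 - X i j2) (M i j1 - M i j2) +
        logisticLossDeriv (X i j1 - X i j2) (M i j1 - M i j2) *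
          ((N i j1 - N i j2) - (M i j1 - M i j2))) := by simp only [Matrix.sub_apply]; ring
    _ ≤ _ := by gcongr; exact logisticLoss_add_mul_sub_le _ _ _

theorem sum_sum_mul_mul_sub_sq_le_of_zero_or_one {w : κ → ℝ} (hw : ∀ j, w j = 0 ∨ w j = 1)
    {R : ℝ} (hR : ∑ j, w j ≤ R) (h : κ → ℝ) :
    ∑ j1, ∑ j2, w j1 * w j2 * (h j1 - h j2) ^ 2 ≤ 2 * R * ∑ j, h j ^ 2 := by
  have hw0 : ∀ j, 0 ≤ w j := fun j => (hw j).elim Eq.ge fun h => zero_le_one.trans h.ge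
  have hsum : (∑ j, w j) * ∑ j, w j * h j ^ 2 ≤ R * ∑ j, h j ^ 2 := by
    refine mul_le_mul hR (Finset.sum_le_sum fun j _ => ?_)
      (Finset.sum_nonneg fun j _ => mul_nonneg (hw0 j) (sq_nonneg _))
      ((Finset.sum_nonneg fun j _ => hw0 j).trans hR)
    rcases hw j with hj | hj <;> simp [hj, sq_nonneg]
  nlinarith [sum_sum_mul_mul_sub_sq_le w h]

theorem rowLoss_le_add_rowLossDeriv_add_sq {X W : Matrix ι κ ℝ}
    (hW : ∀ i j, W i j = 0 ∨ W i j = 1) {B R : ℝ} (hB0 : 0 ≤ B)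
    (hB : ∀ i j1 j2, W i j1 = 1 → W i j2 = 1 → (X i j1 - X i j2) ^ 2 ≤ B)
    (hR : ∀ i, ∑ j, W i j ≤ R) (M N : Matrix ι κ ℝ) :
    rowLoss X W N ≤
      rowLoss X W M + rowLossDeriv X W M (N - M) + B / 4 * R * ∑ i, ∑ j, (N - M) i j ^ 2 := by
  set H := N - M
  have hlocal : rowLoss X W N ≤ rowLoss X W M + rowLossDeriv X W M H +
      ∑ i, ∑ j1, ∑ j2, B / 8 * (W i j1 * W i j2 * (H i j1 - H i j2) ^ 2) := by
    simp only [rowLoss, rowLossDeriv, LinearMap.coe_mk, AddHom.coe_mk, ← Finset.sum_add_distrib]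
    gcongr with i _ j1 _ j2 _
    rcases hW i j1 with h1 | h1 <;> rcases hW i j2 with h2 | h2 <;> simp only [h1, h2] <;>
      try simp
    have hc := logisticLoss_le_add_mul_sub_add_sq (X i j1 - X i j2) (M i j1 - M i j2)
      (N i j1 - N i j2)
    rw [show (N i j1 - N i j2) - (M i j1 - M i j2) = H i j1 - H i j2 by
      simp only [H, Matrix.sub_apply]; ring] at hc
    nlinarith [mul_le_mul_of_nonneg_right (hB i j1 j2 h1 h2) (sq_nonneg (H i j1 - H i j2))]
  have hquad : ∑ i, ∑ j1, ∑ j2, B / 8 * (W i j1 * W i j2 * (H i j1 - H i j2) ^ 2) ≤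
      B / 4 * R * ∑ i, ∑ j, H i j ^ 2 := by
    simp only [← Finset.mul_sum]
    calc B / 8 * ∑ i, ∑ j1, ∑ j2, W i j1 * W i j2 * (H i j1 - H i j2) ^ 2
        ≤ B / 8 * ∑ i, 2 * R * ∑ j, H i j ^ 2 := by
          gcongr with i
          exact sum_sum_mul_mul_sub_sq_le_of_zero_or_one (hW i) (hR i) (H i)
      _ = B / 4 * R * ∑ i, ∑ j, H i j ^ 2 := by rw [← Finset.mul_sum]; ring
  linarith

end RowLoss

theorem lossL_eq_rowLoss (X W M : Mat n1 n2) :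
    lossL X W M = 1 / n2 * rowLoss X W M + 1 / n1 * rowLoss Xᵀ Wᵀ Mᵀ := rfl

def lossLDeriv (X W M : Mat n1 n2) : Mat n1 n2 →ₗ[ℝ] ℝ :=
  (1 / n2 : ℝ) • rowLossDeriv X W M +
    (1 / n1 : ℝ) • (rowLossDeriv Xᵀ Wᵀ Mᵀ).comp (transposeLinearEquiv _ _ ℝ ℝ).toLinearMap

theorem lossLDeriv_apply (X W M H : Mat n1 n2) :
    lossLDeriv X W M H = 1 / n2 * rowLossDeriv X W M H + 1 / n1 * rowLossDeriv Xᵀ Wᵀ Mᵀ Hᵀ :=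
  rfl

theorem hasDerivAt_lossL_add_smul (X W M H : Mat n1 n2) :
    HasDerivAt (fun t : ℝ => lossL X W (M + t • H)) (lossLDeriv X W M H) 0 := by
  have hcol := hasDerivAt_rowLoss_add_smul Xᵀ Wᵀ Mᵀ Hᵀ
  simp only [← transpose_smul, ← transpose_add] at hcol
  rw [lossLDeriv_apply]
  exact ((hasDerivAt_rowLoss_add_smul X W M H).const_mul _).add (hcol.const_mul _)

theorem updEntry_eq_add_smul_single (M : Mat n1 n2) (i : Fin n1) (j : Fin n2) (t : ℝ) :
    updEntry M i j t = M + (t - M i j) • single i j 1 := by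
  ext i' j'
  by_cases h : i' = i ∧ j' = j
  · obtain ⟨rfl, rfl⟩ := h; simp [updEntry]
  · have h' : ¬(i = i' ∧ j = j') := fun h' => h ⟨h'.1.symm, h'.2.symm⟩
    simp [updEntry, h, single_apply, if_neg h']

theorem gradL_apply (X W M : Mat n1 n2) (i : Fin n1) (j : Fin n2) :
    gradL X W M i j = lossLDeriv X W M (single i j 1) := by
  have hshift : HasDerivAt (fun t : ℝ => t - M i j) 1 (M i j) := (hasDerivAt_id' _).sub_const _
  have := (hasDerivAt_lossL_add_smul X W M (single i j 1)).comp_of_eq (M i j) hshift (by simp)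
  simp only [mul_one] at this
  simp only [gradL, updEntry_eq_add_smul_single]
  exact this.deriv

theorem sum_gradL_mul (X W M H : Mat n1 n2) :
    ∑ i, ∑ j, gradL X W M i j * H i j = lossLDeriv X W M H := by
  conv_rhs => rw [matrix_eq_sum_single H]
  simp only [map_sum, gradL_apply]
  refine Finset.sum_congr rfl fun i _ => Finset.sum_congr rfl fun j _ => ?_
  rw [mul_comm, ← smul_eq_mul, ← LinearMap.map_smul, smul_single, smul_eq_mul, mul_one]

theorem lossL_add_lossLDeriv_le {X W : Mat n1 n2} (hW : ∀ i j, 0 ≤ W i j) (M N : Mat n1 n2) :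
    lossL X W M + lossLDeriv X W M (N - M) ≤ lossL X W N := by
  have hrow := rowLoss_add_rowLossDeriv_le (X := X) hW M N
  have hcol := rowLoss_add_rowLossDeriv_le (X := Xᵀ) (W := Wᵀ) (fun j i => hW i j) Mᵀ Nᵀ
  rw [← transpose_sub] at hcol
  rw [lossL_eq_rowLoss, lossL_eq_rowLoss, lossLDeriv_apply]
  linear_combination (1 / (n2 : ℝ)) * hrow + (1 / (n1 : ℝ)) * hcol

theorem sq_sub_le_Lx {X W : Mat n1 n2} {i1 i2 : Fin n1} {j1 j2 : Fin n2}
    (h1 : W i1 j1 = 1) (h2 : W i2 j2 = 1) : (X i1 j1 - X i2 j2) ^ 2 ≤ Lx X W := by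
  set S : Set ℝ := {x | ∃ p : Fin n1 × Fin n2, W p.1 p.2 = 1 ∧ x = X p.1 p.2}
  have hS : S.Finite := (Set.finite_range fun p : Fin n1 × Fin n2 => X p.1 p.2).subset
    (by rintro _ ⟨p, _, rfl⟩; exact ⟨p, rfl⟩)
  have hm1 : X i1 j1 ∈ S := ⟨(i1, j1), h1, rfl⟩
  have hm2 : X i2 j2 ∈ S := ⟨(i2, j2), h2, rfl⟩
  have := le_csSup hS.bddAbove hm1
  have := le_csSup hS.bddAbove hm2
  have := csInf_le hS.bddBelow hm1
  have := csInf_le hS.bddBelow hm2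
  exact sq_le_sq' (by linarith) (by linarith)

theorem Lf_nonneg (X : Mat n1 n2) {W : Mat n1 n2} (hW : ∀ i j, 0 ≤ W i j) : 0 ≤ Lf X W := by
  have hrow : 0 ≤ sSup (Set.range fun i : Fin n1 => ∑ j, W i j) :=
    Real.sSup_nonneg (by rintro _ ⟨i, rfl⟩; exact Finset.sum_nonneg fun j _ => hW i j)
  have hcol : 0 ≤ sSup (Set.range fun j : Fin n2 => ∑ i, W i j) :=
    Real.sSup_nonneg (by rintro _ ⟨j, rfl⟩; exact Finset.sum_nonneg fun i _ => hW i j)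
  unfold Lf Lw Lx
  positivity

theorem lossL_le_add_lossLDeriv_add_sq {X W : Mat n1 n2} (hW : ∀ i j, W i j = 0 ∨ W i j = 1)
    (M N : Mat n1 n2) :
    lossL X W N ≤ lossL X W M + lossLDeriv X W M (N - M) + Lf X W / 2 * frobNorm (N - M) ^ 2 := by
  have hrow := rowLoss_le_add_rowLossDeriv_add_sq (X := X) hW (B := Lx X W) (sq_nonneg _)
    (fun i j1 j2 h1 h2 => sq_sub_le_Lx h1 h2)
    (fun i => le_csSup (Set.finite_range fun i => ∑ j, W i j).bddAbove ⟨i, rfl⟩) M N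
  have hcol := rowLoss_le_add_rowLossDeriv_add_sq (X := Xᵀ) (W := Wᵀ) (fun j i => hW i j)
    (B := Lx X W) (sq_nonneg _)
    (fun j i1 i2 (h1 : W i1 j = 1) (h2 : W i2 j = 1) => sq_sub_le_Lx h1 h2)
    (fun j => le_csSup (Set.finite_range fun j => ∑ i, W i j).bddAbove ⟨j, rfl⟩) Mᵀ Nᵀ
  rw [← transpose_sub, Finset.sum_comm] at hcol
  simp only [transpose_apply] at hcol
  rw [lossL_eq_rowLoss, lossL_eq_rowLoss, lossLDeriv_apply, frobNorm_sq, Lf, Lw]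
  linear_combination (1 / (n2 : ℝ)) * hrow + (1 / (n1 : ℝ)) * hcol

theorem continuous_lossL (X W : Mat n1 n2) : Continuous (lossL X W) := by
  unfold lossL pl
  fun_prop (disch := intros; positivity)

theorem objF_sub_le_of_isProx {X W : Mat n1 n2} (hW : ∀ i j, W i j = 0 ∨ W i j = 1)
    {lam al mu : ℝ} (hlam : 0 ≤ lam) (hmu : Lf X W < mu) {Y P Z : Mat n1 n2}
    (hP : IsProx (lam / mu) al (Y - mu⁻¹ • gradL X W Y) P) (hZ : infNorm Z ≤ al) :
    mu / 2 * (frobNorm (P - Z) ^ 2 - frobNorm (Y - Z) ^ 2) ≤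
      objF X W lam Z - objF X W lam P := by
  have hW0 : ∀ i j, 0 ≤ W i j := fun i j => (hW i j).elim Eq.ge fun h => zero_le_one.trans h.ge
  have hmu0 : 0 < mu := (Lf_nonneg X hW0).trans_lt hmu
  let toMat : EuclideanSpace ℝ (Fin n1 × Fin n2) →ₗ[ℝ] Mat n1 n2 := frobEquiv.symm.toLinearMap
  have hC : Convex ℝ (toMat ⁻¹' {A | infNorm A ≤ al}) := by
    simpa using (convexOn_infNorm.comp_linearMap toMat).convex_le al
  have hg : ConvexOn ℝ (toMat ⁻¹' {A | infNorm A ≤ al}) fun w => lam * nuclNorm (toMat w) :=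
    ((convexOn_nuclNorm.smul hlam).comp_linearMap toMat).subset (Set.subset_univ _) hC
  have hprox : IsMinOn (fun w => 1 / 2 * ‖w - (frobEquiv Y - mu⁻¹ • frobEquiv (gradL X W Y))‖ ^ 2
      + mu⁻¹ * (lam * nuclNorm (toMat w))) (toMat ⁻¹' {A | infNorm A ≤ al}) (frobEquiv P) :=
    isMinOn_iff.2 fun w hw => by
      rw [← map_smul, ← map_sub, ← frobEquiv.apply_symm_apply w, ← map_sub, ← map_sub,
        norm_frobEquiv, norm_frobEquiv]
      simpa only [proxObj, toMat, LinearEquiv.coe_coe, LinearEquiv.symm_apply_apply,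
        div_eq_inv_mul, mul_assoc] using hP.2 (toMat w) hw
  have key := proxGrad_three_point (f := fun w => lossL X W (toMat w)) hg hmu0 hmu.le
    (p := frobEquiv P) (z := frobEquiv Z) (by simpa [toMat] using hP.1)
    (by simpa [toMat] using hZ) hprox
    (by rw [← map_sub, inner_frobEquiv, sum_gradL_mul]
        simpa [toMat] using lossL_add_lossLDeriv_le (X := X) hW0 Y Z)
    (by rw [← map_sub, inner_frobEquiv, sum_gradL_mul, norm_frobEquiv]
        simpa [toMat] using lossL_le_add_lossLDeriv_add_sq (X := X) hW Y P)
  simpa [toMat, ← map_sub, norm_frobEquiv, objF] using key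

theorem statement1_general (n1 n2 : ℕ)
    (al lam : ℝ) (hlam : 0 < lam)
    (X W : Mat n1 n2) (hW01 : ∀ i j, W i j = 0 ∨ W i j = 1)
    (mu : ℝ) (hmu : Lf X W < mu)
    (M : ℕ → Mat n1 n2) (hM0 : infNorm (M 0) ≤ al)
    (hiter : ∀ k : ℕ, IsProx (lam / mu) al (M k - mu⁻¹ • gradL X W (M k)) (M (k + 1)))
    (F : ℕ → ℝ) (hF : ∀ k, F k = objF X W lam (M k))
    (Mhat : Mat n1 n2) (hmin : IsMin X W lam al Mhat) :
    (∀ Mbar : Mat n1 n2, MapClusterPt Mbar Filter.atTop M → IsMin X W lam al Mbar) ∧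
    ∀ k : ℕ, 1 ≤ k →
      F k - objF X W lam Mhat ≤ mu * frobNorm (M 0 - Mhat) ^ 2 / (2 * (k : ℝ)) := by
  have hmu0 : 0 < mu :=
    (Lf_nonneg X fun i j => (hW01 i j).elim Eq.ge fun h => zero_le_one.trans h.ge).trans_lt hmu
  have hfeas : ∀ k, infNorm (M k) ≤ al := fun | 0 => hM0 | k + 1 => (hiter k).1
  have hrate : ∀ k : ℕ, 1 ≤ k → objF X W lam (M k) - objF X W lam Mhat ≤
      mu / 2 * frobNorm (M 0 - Mhat) ^ 2 / k := fun k hk =>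
    sub_le_div_of_three_point (S := {A | infNorm A ≤ al}) (D := fun A B => frobNorm (A - B) ^ 2)
      (by positivity) (fun _ _ => sq_nonneg _) (fun _ => by simp [frobNorm]) hfeas
      (fun k _ hZ => objF_sub_le_of_isProx hW01 hlam.le hmu (hiter k) hZ) hmin.1 hk
  refine ⟨fun Mbar hMbar => ?_, fun k hk => ?_⟩
  · obtain ⟨hfeasbar, hminbar⟩ := mapClusterPt_mem_and_isMinOn
      ((continuous_lossL X W).add (continuous_const.mul continuous_nuclNorm))
      (isClosed_le continuous_infNorm continuous_const) hfeas (isMinOn_iff.2 hmin.2)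
      (tendsto_of_sub_le_div (fun k => hmin.2 _ (hfeas k)) hrate) hMbar
    exact ⟨hfeasbar, isMinOn_iff.1 hminbar⟩
  · rw [hF, mul_comm 2, ← div_div, div_right_comm, ← div_mul_eq_mul_div]
    exact hrate k hk

theorem statement1 (n1 n2 : ℕ) (hn1 : 0 < n1) (hn2 : 0 < n2)
    (al lam : ℝ) (hal : 0 < al) (hlam : 0 < lam)
    (X W : Mat n1 n2) (hW01 : ∀ i j, W i j = 0 ∨ W i j = 1)
    (hWnz : ∃ i j, W i j = 1)
    (mu : ℝ) (hmu : Lf X W < mu)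
    (M : ℕ → Mat n1 n2) (hM0 : infNorm (M 0) ≤ al)
    (hiter : ∀ k : ℕ, IsProx (lam / mu) al (M k - mu⁻¹ • gradL X W (M k)) (M (k + 1)))
    (F : ℕ → ℝ) (hF : ∀ k, F k = objF X W lam (M k))
    (Mhat : Mat n1 n2) (hmin : IsMin X W lam al Mhat) :
    (∀ Mbar : Mat n1 n2, MapClusterPt Mbar Filter.atTop M → IsMin X W lam al Mbar) ∧
    ∀ k : ℕ, 1 ≤ k →
      F k - objF X W lam Mhat ≤ mu * frobNorm (M 0 - Mhat) ^ 2 / (2 * (k : ℝ)) :=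
  statement1_general n1 n2 al lam hlam X W hW01 mu hmu M hM0 hiter F hF Mhat hmin

end NMC
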